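/- arXiv:1004.2439 — 4 statements merged into one kernel-verified Lean document; each statement's English description precedes it below -/
import Mathlib

section
/- For real a with -1 < a < 1, the integral of tan(x)^a over x from 0 to π/2 equals π / (2 cos(πa/2)). -/
/-! Substituting `x = sin² θ` turns `2 ∫ tan^a` into the Beta integral `B(u, 1 - u)` with
`u = (1 + a) / 2`, and `B(u, 1 - u) = Γ(u) Γ(1 - u) = π / sin (π u) = π / cos (π a / 2)` by
Euler's reflection formula. -/

open Real MeasureTheory Set

theorem ofReal_integral_rpow_mul_one_sub_rpow (u v : ℝ) :
    ((∫ x in (0:ℝ)..1, x ^ (u - 1) * (1 - x) ^ (v - 1) : ℝ) : ℂ) = Complex.betaIntegral u v := by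
  rw [Complex.betaIntegral, ← intervalIntegral.integral_ofReal]
  refine intervalIntegral.integral_congr fun x hx => ?_
  rw [uIcc_of_le zero_le_one] at hx
  rw [Complex.ofReal_mul, Complex.ofReal_cpow hx.1, Complex.ofReal_cpow (sub_nonneg.2 hx.2)]
  norm_cast

theorem integral_rpow_mul_one_sub_rpow_neg_eq_pi_div_sin {u : ℝ} (hu0 : 0 < u) (hu1 : u < 1) :
    ∫ x in (0:ℝ)..1, x ^ (u - 1) * (1 - x) ^ (-u) = π / sin (π * u) := by
  apply Complex.ofReal_injective
  have h := ofReal_integral_rpow_mul_one_sub_rpow u (1 - u)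
  rw [sub_sub_cancel_left] at h
  rw [h, Complex.betaIntegral_eq_Gamma_mul_div _ _ (by simpa) (by simpa)]
  push_cast
  rw [add_sub_cancel, Complex.Gamma_one, div_one, Complex.Gamma_mul_Gamma_one_sub]

theorem integral_sin_mul_cos_smul_comp_sin_sq {E : Type*} [NormedAddCommGroup E] [NormedSpace ℝ E]
    (g : ℝ → E) :
    ∫ θ in (0:ℝ)..π / 2, (2 * sin θ * cos θ) • g (sin θ ^ 2) = ∫ x in (0:ℝ)..1, g x := by
  have hderiv (θ : ℝ) : HasDerivAt (fun θ => sin θ ^ 2) (2 * sin θ * cos θ) θ := by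
    simpa [mul_comm, mul_assoc] using (hasDerivAt_sin θ).fun_pow 2
  have hnonneg (θ : ℝ) (hθ : θ ∈ Ioo 0 (π / 2)) : 0 ≤ 2 * sin θ * cos θ := by
    have := sin_nonneg_of_nonneg_of_le_pi hθ.1.le (by linarith [hθ.2, pi_pos])
    have := cos_nonneg_of_mem_Icc ⟨by linarith [hθ.1, pi_pos], hθ.2.le⟩
    positivity
  have h := integral_Icc_deriv_smul_of_deriv_nonneg (a := 0) (b := π / 2) (g := g)
    (by fun_prop) (fun θ _ => hderiv θ) hnonneg (by positivity)
  rw [sin_zero, sin_pi_div_two, one_pow, zero_pow two_ne_zero] at h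
  rw [intervalIntegral.integral_of_le (by positivity), intervalIntegral.integral_of_le zero_le_one,
    ← integral_Icc_eq_integral_Ioc, ← integral_Icc_eq_integral_Ioc, h]

theorem sin_mul_cos_mul_rpow_sin_sq_eq_tan_rpow {θ : ℝ} (hθ : θ ∈ Ioo 0 (π / 2)) (u : ℝ) :
    2 * sin θ * cos θ * ((sin θ ^ 2) ^ (u - 1) * (1 - sin θ ^ 2) ^ (-u)) =
      2 * tan θ ^ (2 * u - 1) := by
  have hs : 0 < sin θ := sin_pos_of_pos_of_lt_pi hθ.1 (by linarith [hθ.2, pi_pos])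
  have hc : 0 < cos θ := cos_pos_of_mem_Ioo ⟨by linarith [hθ.1, pi_pos], hθ.2⟩
  rw [← cos_sq', ← rpow_natCast, ← rpow_natCast, ← rpow_mul hs.le, ← rpow_mul hc.le,
    tan_eq_sin_div_cos, div_rpow hs.le hc.le,
    show ((2 : ℕ) : ℝ) * (u - 1) = (2 * u - 1) - 1 by push_cast; ring,
    show ((2 : ℕ) : ℝ) * -u = -(2 * u - 1) - 1 by push_cast; ring,
    rpow_sub_one hs.ne', rpow_sub_one hc.ne', rpow_neg hc.le]
  field_simp

theorem stmt8 (a : ℝ) (h1 : -1 < a) (h2 : a < 1) :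
    ∫ x in (0:ℝ)..(π/2), (Real.tan x) ^ a = π / (2 * Real.cos (π * a / 2)) := by
  set u := (1 + a) / 2 with hu
  have ha : a = 2 * u - 1 := by rw [hu]; ring
  have hsin : sin (π * u) = cos (π * a / 2) := by
    rw [hu, show π * ((1 + a) / 2) = π / 2 - -(π * a / 2) by ring, sin_pi_div_two_sub, cos_neg]
  calc ∫ x in (0:ℝ)..π / 2, tan x ^ a
      = 1 / 2 * ∫ θ in (0:ℝ)..π / 2,
          (2 * sin θ * cos θ) • ((sin θ ^ 2) ^ (u - 1) * (1 - sin θ ^ 2) ^ (-u)) := by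
        rw [← intervalIntegral.integral_const_mul]
        -- for `a = 0` the integrands differ at the endpoints, where `tan θ ^ a = 0 ^ 0 = 1`
        refine intervalIntegral.integral_congr_Ioo_of_le (by positivity) fun θ hθ => ?_
        rw [smul_eq_mul, sin_mul_cos_mul_rpow_sin_sq_eq_tan_rpow hθ, ← ha]
        ring
    _ = π / (2 * cos (π * a / 2)) := by
        rw [integral_sin_mul_cos_smul_comp_sin_sq (fun x => x ^ (u - 1) * (1 - x) ^ (-u)),
          integral_rpow_mul_one_sub_rpow_neg_eq_pi_div_sin (by linarith) (by linarith), hsin]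
        ring
end

section
/- Let a, b, c be real numbers with a > -1, c > -1 and a + b + 2c + 2 = 0. Then the integral of sin(x)^a * cos(x)^b * cos(2x)^c over x from 0 to π/4 equals (1/2) * B((a+1)/2, c+1). -/
/-!
Substitute `t = tan² x`, which maps `(0, π/4)` monotonically onto `(0, 1)` with
`dt = 2 tan x / cos² x dx` and `1 - t = cos 2x / cos² x`. The condition `a + b + 2c + 2 = 0` is
exactly what makes the powers of `cos x` cancel, so that the integrand becomes half the Beta
integrand `t^((a+1)/2 - 1) (1 - t)^c`.
-/

open Real MeasureTheory Set

noncomputable def betaIntegrand (p q u : ℝ) : ℝ := u ^ (p - 1) * (1 - u) ^ (q - 1)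

lemma intervalIntegral_betaIntegrand_eq_beta {p q : ℝ} (hp : 0 < p) (hq : 0 < q) :
    ∫ u in (0:ℝ)..1, betaIntegrand p q u = ProbabilityTheory.beta p q := by
  have hcast : Complex.betaIntegral p q = ↑(∫ u in (0:ℝ)..1, betaIntegrand p q u) := by
    rw [Complex.betaIntegral, ← intervalIntegral.integral_ofReal]
    refine intervalIntegral.integral_congr fun u hu => ?_
    rw [uIcc_of_le zero_le_one] at hu
    simp [betaIntegrand, Complex.ofReal_cpow hu.1, Complex.ofReal_cpow (sub_nonneg.2 hu.2)]
  rw [ProbabilityTheory.beta_eq_betaIntegralReal p q hp hq, hcast, Complex.ofReal_re]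

lemma one_sub_tan_sq {x : ℝ} (hx : cos x ≠ 0) : 1 - tan x ^ 2 = cos (2 * x) / cos x ^ 2 := by
  rw [tan_eq_sin_div_cos, cos_two_mul]
  field_simp
  linear_combination (-1) * sin_sq_add_cos_sq x

lemma hasDerivAt_tan_sq {x : ℝ} (hx : cos x ≠ 0) :
    HasDerivAt (fun x => tan x ^ 2) (2 * tan x / cos x ^ 2) x :=
  ((hasDerivAt_tan hx).fun_pow 2).congr_deriv (by ring)

lemma integral_Icc_zero_pi_div_four_comp_tan_sq (g : ℝ → ℝ) :
    ∫ x in Icc 0 (π / 4), 2 * tan x / cos x ^ 2 * g (tan x ^ 2) = ∫ u in Icc 0 1, g u := by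
  have hcos : ∀ x ∈ Icc 0 (π / 4), 0 < cos x := fun x hx =>
    cos_pos_of_mem_Ioo ⟨by linarith [hx.1, pi_pos], by linarith [hx.2, pi_pos]⟩
  have := integral_Icc_deriv_smul_of_deriv_nonneg (g := g)
    ((continuousOn_tan.mono fun x hx => (hcos x hx).ne').pow 2)
    (fun x hx => hasDerivAt_tan_sq (hcos x (Ioo_subset_Icc_self hx)).ne')
    (fun x hx => div_nonneg (mul_nonneg zero_le_two
      (tan_nonneg_of_nonneg_of_le_pi_div_two hx.1.le (by linarith [hx.2, pi_pos])))
      (sq_nonneg _)) (by positivity)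
  simpa [tan_pi_div_four] using this

lemma deriv_tan_sq_mul_betaIntegrand_tan_sq {a b c x : ℝ} (h : a + b + 2 * c + 2 = 0)
    (hx : x ∈ Ioo 0 (π / 4)) :
    2 * tan x / cos x ^ 2 * betaIntegrand ((a + 1) / 2) (c + 1) (tan x ^ 2) =
      2 * (sin x ^ a * cos x ^ b * cos (2 * x) ^ c) := by
  obtain ⟨hx0, hx1⟩ := hx
  have hsin : 0 < sin x := sin_pos_of_pos_of_lt_pi hx0 (by linarith [pi_pos])
  have hcos : 0 < cos x := cos_pos_of_mem_Ioo ⟨by linarith [pi_pos], by linarith⟩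
  have hcos2 : 0 < cos (2 * x) := cos_pos_of_mem_Ioo ⟨by linarith [pi_pos], by linarith⟩
  rw [betaIntegrand, one_sub_tan_sq hcos.ne', tan_eq_sin_div_cos]
  -- With every base written as an exponential, the identity is linear in the exponents.
  rw [← exp_log hsin, ← exp_log hcos, ← exp_log hcos2]
  simp only [← exp_sub, ← exp_nat_mul, ← exp_mul, ← exp_add, mul_div_assoc, mul_assoc]
  congr 2
  push_cast
  linear_combination (-log (cos x)) * h

theorem stmt13 (a b c : ℝ) (ha : -1 < a) (hc : -1 < c) (h : a + b + 2 * c + 2 = 0) :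
    ∫ x in (0:ℝ)..(π/4), (Real.sin x) ^ a * (Real.cos x) ^ b * (Real.cos (2 * x)) ^ c =
      (1/2) * (Real.Gamma ((a+1)/2) * Real.Gamma (c+1) / Real.Gamma ((a+1)/2 + (c+1))) := by
  calc ∫ x in (0:ℝ)..(π/4), sin x ^ a * cos x ^ b * cos (2 * x) ^ c
      = 1 / 2 * ∫ x in Icc 0 (π / 4),
          2 * tan x / cos x ^ 2 * betaIntegrand ((a + 1) / 2) (c + 1) (tan x ^ 2) := by
        rw [intervalIntegral.integral_of_le (by positivity), ← integral_Icc_eq_integral_Ioc,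
          integral_Icc_eq_integral_Ioo, integral_Icc_eq_integral_Ioo,
          setIntegral_congr_fun measurableSet_Ioo fun x hx =>
            deriv_tan_sq_mul_betaIntegrand_tan_sq h hx,
          integral_const_mul]
        ring
    _ = 1 / 2 * ∫ u in (0:ℝ)..1, betaIntegrand ((a + 1) / 2) (c + 1) u := by
        rw [integral_Icc_zero_pi_div_four_comp_tan_sq, intervalIntegral.integral_of_le zero_le_one,
          integral_Icc_eq_integral_Ioc]
    _ = 1 / 2 * ProbabilityTheory.beta ((a + 1) / 2) (c + 1) :=
        congrArg _ (intervalIntegral_betaIntegrand_eq_beta (by linarith) (by linarith))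
end

section
/- For every natural number n ≥ 1, the integral of cos(2x)^(n - 1/2) / cos(x)^(2n+1) over x from 0 to π/4 equals (π / 2^(2n+1)) * binomial(2n, n). -/
open Real intervalIntegral Set

lemma cosPowInt (n : ℕ) :
    ∫ x in (0:ℝ)..(π/2), Real.cos x ^ (2*n) = π / 2 ^ (2*n+1) * (Nat.choose (2*n) n : ℝ) := by
  induction n with
  | zero => simp
  | succ k ih =>
    rw [show 2 * (k+1) = 2*k + 2 from by ring, integral_cos_pow, ih, cos_pi_div_two, sin_zero]
    have hkc : ((k:ℝ)+1) * ((2*(k+1)).choose (k+1) : ℝ) = 2 * (2*(k:ℝ)+1) * ((2*k).choose k : ℝ) := by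
      have h := Nat.succ_mul_centralBinom_succ k
      simp only [Nat.centralBinom] at h
      exact_mod_cast congrArg (Nat.cast : ℕ → ℝ) h
    have h1 : ((k:ℝ)+1) ≠ 0 := by positivity
    have h2 : (2:ℝ)*(2*k)+4 ≠ 0 := by positivity
    have hkc' : ((2*k+2).choose (k+1) : ℝ) = 2 * (2*(k:ℝ)+1) * ((2*k).choose k) / ((k:ℝ)+1) := by
      rw [eq_div_iff h1]
      have : (2*(k+1)) = 2*k+2 := by ring
      rw [this] at hkc
      linarith [hkc]
    rw [hkc']
    push_cast
    field_simp
    ring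

lemma sinSubst (n : ℕ) (hn : 1 ≤ n) :
    ∫ t in (0:ℝ)..1, (1 - t^2) ^ ((n:ℝ) - 1/2) = ∫ x in (0:ℝ)..(π/2), Real.cos x ^ (2*n) := by
  have hp : (0:ℝ) ≤ (n:ℝ) - 1/2 := by
    have : (1:ℝ) ≤ n := by exact_mod_cast hn
    linarith
  have hf : Continuous (fun t : ℝ => (1 - t^2) ^ ((n:ℝ) - 1/2)) :=
    (Real.continuous_rpow_const hp).comp (by continuity)
  have key := intervalIntegral.integral_comp_smul_deriv
    (a := (0:ℝ)) (b := π/2) (f := Real.sin) (f' := Real.cos)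
    (g := fun t : ℝ => (1 - t^2) ^ ((n:ℝ) - 1/2))
    (fun x _ => Real.hasDerivAt_sin x) Real.continuousOn_cos hf
  rw [Real.sin_zero, Real.sin_pi_div_two] at key
  rw [← key]
  apply intervalIntegral.integral_congr
  intro x hx
  rw [Set.uIcc_of_le (by positivity : (0:ℝ) ≤ π/2)] at hx
  have hc : 0 ≤ Real.cos x := Real.cos_nonneg_of_mem_Icc ⟨by linarith [hx.1, pi_pos], hx.2⟩
  have h1 : (1 : ℝ) - Real.sin x ^ 2 = Real.cos x ^ 2 := by
    have := Real.sin_sq_add_cos_sq x; linarith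
  simp only [Function.comp, smul_eq_mul, h1]
  rcases eq_or_lt_of_le hc with h0 | h0
  · rw [← h0]
    simp [zero_pow (show 2*n ≠ 0 by omega)]
  · rw [← Real.rpow_natCast (Real.cos x) (2*n), ← Real.rpow_natCast (Real.cos x) 2,
      ← Real.rpow_mul h0.le]
    nth_rewrite 1 [← Real.rpow_one (Real.cos x)]
    rw [← Real.rpow_add h0]
    congr 1
    push_cast
    ring

theorem stmt14 (n : ℕ) (hn : 1 ≤ n) :
    ∫ x in (0:ℝ)..(π/4), (Real.cos (2 * x)) ^ ((n : ℝ) - 1/2) * (Real.cos x) ^ (-(2 * (n : ℝ) + 1)) =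
      π / 2 ^ (2 * n + 1) * (Nat.choose (2 * n) n : ℝ) := by
  rw [← cosPowInt n, ← sinSubst n hn]
  have hp : (0:ℝ) ≤ (n:ℝ) - 1/2 := by
    have : (1:ℝ) ≤ n := by exact_mod_cast hn
    linarith
  have hf : Continuous (fun t : ℝ => (1 - t^2) ^ ((n:ℝ) - 1/2)) :=
    (Real.continuous_rpow_const hp).comp (by continuity)
  have hcos : ∀ x ∈ Set.uIcc (0:ℝ) (π/4), 0 < Real.cos x := by
    intro x hx
    rw [Set.uIcc_of_le (by positivity : (0:ℝ) ≤ π/4)] at hx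
    apply Real.cos_pos_of_mem_Ioo
    constructor
    · linarith [hx.1, pi_pos]
    · linarith [hx.2, pi_pos]
  have key := intervalIntegral.integral_comp_smul_deriv
    (a := (0:ℝ)) (b := π/4) (f := Real.tan) (f' := fun x => 1 / Real.cos x ^ 2)
    (g := fun t : ℝ => (1 - t^2) ^ ((n:ℝ) - 1/2))
    (fun x hx => Real.hasDerivAt_tan (hcos x hx).ne')
    (ContinuousOn.div continuousOn_const (Real.continuousOn_cos.pow 2)
      (fun x hx => pow_ne_zero 2 (hcos x hx).ne')) hf
  rw [Real.tan_zero, Real.tan_pi_div_four] at key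
  rw [← key]
  apply intervalIntegral.integral_congr
  intro x hx
  have hc := hcos x hx
  rw [Set.uIcc_of_le (by positivity : (0:ℝ) ≤ π/4)] at hx
  have hc2 : (0:ℝ) ≤ Real.cos (2*x) := by
    apply Real.cos_nonneg_of_mem_Icc
    constructor
    · linarith [hx.1, pi_pos]
    · linarith [hx.2]
  simp only [Function.comp, smul_eq_mul]
  have htan : (1:ℝ) - Real.tan x ^ 2 = Real.cos (2*x) / Real.cos x ^ 2 := by
    rw [Real.tan_eq_sin_div_cos, div_pow, Real.cos_two_mul]
    have hs := Real.sin_sq_add_cos_sq x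
    field_simp
    nlinarith [hs]
  rw [htan, Real.div_rpow hc2 (by positivity),
    ← Real.rpow_natCast (Real.cos x) 2, ← Real.rpow_mul hc.le]
  rw [show ((2:ℕ):ℝ) = (2:ℝ) from by norm_num]
  rw [one_div (Real.cos x ^ (2:ℝ)), ← Real.rpow_neg hc.le,
    div_eq_mul_inv _ (Real.cos x ^ ((2:ℝ) * ((n:ℝ) - 1/2))), ← Real.rpow_neg hc.le,
    mul_comm (Real.cos x ^ (-(2:ℝ))), mul_assoc, ← Real.rpow_add hc]
  congr 1
  ring_nf
end

section
/- For real μ with 1/2 < μ < 1, the integral of sin(x)^(2μ - 2) / cos(2x)^μ over x from 0 to π/4 equals Γ(μ - 1/2) * Γ(1 - μ) / (2√π). -/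
/-!
The substitution `u = tan² x` maps `(0, π/4)` onto `(0, 1)` and turns the integrand into
`½ u^(μ - 3/2) (1 - u)^(-μ)`, since `sin² x = u / (1 + u)`, `cos 2x = (1 - u) / (1 + u)` and
`dx = du / (2 √u (1 + u))`. What remains is the Beta integral `B(μ - 1/2, 1 - μ)`, and
`Γ(1/2) = √π`.
-/

open Real MeasureTheory Set

theorem integral_rpow_mul_one_sub_rpow {a b : ℝ} (ha : 0 < a) (hb : 0 < b) :
    ∫ x in (0:ℝ)..1, x ^ (a - 1) * (1 - x) ^ (b - 1) = Gamma a * Gamma b / Gamma (a + b) := by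
  have hbeta : Complex.betaIntegral a b =
      ((∫ x in (0:ℝ)..1, x ^ (a - 1) * (1 - x) ^ (b - 1) : ℝ) : ℂ) := by
    rw [Complex.betaIntegral, ← intervalIntegral.integral_ofReal]
    refine intervalIntegral.integral_congr fun x hx => ?_
    rw [uIcc_of_le zero_le_one] at hx
    rw [Complex.ofReal_mul, Complex.ofReal_cpow hx.1, Complex.ofReal_cpow (sub_nonneg.2 hx.2)]
    push_cast
    ring
  have h := Complex.Gamma_mul_Gamma_eq_betaIntegral (s := a) (t := b) (by simpa using ha)
    (by simpa using hb)
  rw [hbeta, ← Complex.ofReal_add, Complex.Gamma_ofReal, Complex.Gamma_ofReal,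
    Complex.Gamma_ofReal, ← Complex.ofReal_mul, ← Complex.ofReal_mul, Complex.ofReal_inj] at h
  rw [h, mul_div_cancel_left₀ _ (Gamma_pos_of_pos (add_pos ha hb)).ne']

section QuarterPeriod

variable {x : ℝ} (hx : x ∈ Ioo 0 (π / 4))
include hx

lemma sin_pos_of_mem_Ioo_zero_pi_div_four : 0 < sin x :=
  sin_pos_of_pos_of_lt_pi hx.1 (by linarith [hx.2, pi_pos])

lemma cos_pos_of_mem_Ioo_zero_pi_div_four : 0 < cos x :=
  cos_pos_of_mem_Ioo ⟨by linarith [hx.1, pi_pos], by linarith [hx.2, pi_pos]⟩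

lemma cos_two_mul_pos_of_mem_Ioo_zero_pi_div_four : 0 < cos (2 * x) :=
  cos_pos_of_mem_Ioo ⟨by linarith [hx.1, pi_pos], by linarith [hx.2, pi_pos]⟩

lemma tan_pos_of_mem_Ioo_zero_pi_div_four : 0 < tan x :=
  tan_pos_of_pos_of_lt_pi_div_two hx.1 (by linarith [hx.2, pi_pos])

lemma tan_lt_one_of_mem_Ioo_zero_pi_div_four : tan x < 1 := by
  rw [← tan_pi_div_four]
  exact tan_lt_tan_of_lt_of_lt_pi_div_two (by linarith [hx.1, pi_pos]) (by linarith [pi_pos]) hx.2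

end QuarterPeriod

lemma image_tan_sq_Ioo_zero_pi_div_four : (fun x => tan x ^ 2) '' Ioo 0 (π / 4) = Ioo 0 1 := by
  ext u
  constructor
  · rintro ⟨x, hx, rfl⟩
    have ht := tan_pos_of_mem_Ioo_zero_pi_div_four hx
    exact ⟨pow_pos ht 2,
      pow_lt_one₀ ht.le (tan_lt_one_of_mem_Ioo_zero_pi_div_four hx) two_ne_zero⟩
  · rintro ⟨hu0, hu1⟩
    refine ⟨arctan √u, ⟨?_, ?_⟩, by simp [sq_sqrt hu0.le]⟩
    · simpa using arctan_strictMono (sqrt_pos.2 hu0)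
    · rw [← arctan_one]
      exact arctan_strictMono ((sqrt_lt' one_pos).2 (by simpa using hu1))

lemma injOn_tan_sq_Ioo_zero_pi_div_four : InjOn (fun x => tan x ^ 2) (Ioo 0 (π / 4)) := by
  have hmem : ∀ x ∈ Ioo 0 (π / 4), x ∈ Ioo (-(π / 2)) (π / 2) := fun x hx =>
    ⟨by linarith [hx.1, pi_pos], by linarith [hx.2, pi_pos]⟩
  intro a ha b hb hab
  exact injOn_tan (hmem a ha) (hmem b hb) <| (pow_left_inj₀
    (tan_pos_of_mem_Ioo_zero_pi_div_four ha).le (tan_pos_of_mem_Ioo_zero_pi_div_four hb).le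
    two_ne_zero).1 hab

theorem integral_comp_tan_sq_mul_deriv {E : Type*} [NormedAddCommGroup E] [NormedSpace ℝ E]
    (g : ℝ → E) :
    ∫ x in Ioo 0 (π / 4), (2 * tan x / cos x ^ 2) • g (tan x ^ 2) = ∫ u in Ioo 0 1, g u := by
  have hderiv : ∀ x ∈ Ioo 0 (π / 4), HasDerivWithinAt (fun x => tan x ^ 2)
      (2 * tan x / cos x ^ 2) (Ioo 0 (π / 4)) x := fun x hx =>
    ((hasDerivAt_tan (cos_pos_of_mem_Ioo_zero_pi_div_four hx).ne').fun_pow 2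
      ).hasDerivWithinAt.congr_deriv (by norm_num; ring)
  rw [← image_tan_sq_Ioo_zero_pi_div_four, integral_image_eq_integral_abs_deriv_smul
    measurableSet_Ioo hderiv injOn_tan_sq_Ioo_zero_pi_div_four]
  refine setIntegral_congr_fun measurableSet_Ioo fun x hx => ?_
  have := tan_pos_of_mem_Ioo_zero_pi_div_four hx
  have := cos_pos_of_mem_Ioo_zero_pi_div_four hx
  rw [abs_of_pos (by positivity)]

lemma sin_rpow_mul_cos_two_mul_rpow_eq (μ : ℝ) {x : ℝ} (hx : x ∈ Ioo 0 (π / 4)) :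
    sin x ^ (2 * μ - 2) * cos (2 * x) ^ (-μ) =
      (2 * tan x / cos x ^ 2) *
        (1 / 2 * ((tan x ^ 2) ^ (μ - 3 / 2) * (1 - tan x ^ 2) ^ (-μ))) := by
  have hs := sin_pos_of_mem_Ioo_zero_pi_div_four hx
  have hc := cos_pos_of_mem_Ioo_zero_pi_div_four hx
  have hc2 := cos_two_mul_pos_of_mem_Ioo_zero_pi_div_four hx
  have h1 : 1 - tan x ^ 2 = cos (2 * x) / cos x ^ 2 := by
    rw [tan_eq_sin_div_cos, cos_two_mul', div_pow, one_sub_div (by positivity)]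
  rw [h1, tan_eq_sin_div_cos]
  refine log_injOn_pos (mem_Ioi.2 (by positivity)) (mem_Ioi.2 (by positivity)) ?_
  simp (disch := positivity) only [log_mul, log_div, log_rpow, log_pow, one_div, log_inv]
  ring

theorem stmt16 (μ : ℝ) (h1 : 1/2 < μ) (h2 : μ < 1) :
    ∫ x in (0:ℝ)..(π/4), (Real.sin x) ^ (2 * μ - 2) * (Real.cos (2 * x)) ^ (-μ) =
      Real.Gamma (μ - 1/2) * Real.Gamma (1 - μ) / (2 * Real.sqrt π) := by
  have hbeta := integral_rpow_mul_one_sub_rpow (a := μ - 1 / 2) (b := 1 - μ) (by linarith)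
    (by linarith)
  rw [show μ - 1 / 2 + (1 - μ) = 1 / 2 by ring, Gamma_one_half_eq,
    show μ - 1 / 2 - 1 = μ - 3 / 2 by ring, show 1 - μ - 1 = -μ by ring,
    intervalIntegral.integral_of_le zero_le_one, integral_Ioc_eq_integral_Ioo] at hbeta
  rw [intervalIntegral.integral_of_le (by positivity), integral_Ioc_eq_integral_Ioo,
    setIntegral_congr_fun measurableSet_Ioo fun x hx => sin_rpow_mul_cos_two_mul_rpow_eq μ hx]
  refine (integral_comp_tan_sq_mul_deriv fun u =>
    1 / 2 * (u ^ (μ - 3 / 2) * (1 - u) ^ (-μ))).trans ?_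
  rw [integral_const_mul, hbeta]
  ring
end
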